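/- Let 0 < α < 1, T > 0, t̂ ∈ (0,T], and let u, φ : [0,T] → ℝ be such that u - φ attains its maximum over [0,T] at t̂, and assume that K_{(0,t̂)}[u](t̂) and K_{(0,t̂)}[φ](t̂) both exist. Then J[φ](t̂) + K_{(0,t̂)}[φ](t̂) ≤ J[u](t̂) + K_{(0,t̂)}[u](t̂), where J[f](t̂) = (f(t̂)-f(0))/(t̂^α Γ(1-α)) and K_{(0,t̂)}[f](t̂) = (α/Γ(1-α)) ∫_0^{t̂} (f(t̂)-f(t̂-τ)) τ^{-α-1} dτ. -/

import Mathlib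

open Real MeasureTheory Filter Topology

lemma sub_le_sub_of_forall_sub_le {s : Set ℝ} {u φ : ℝ → ℝ} {t x : ℝ}
    (hmax : ∀ y ∈ s, u y - φ y ≤ u t - φ t) (hx : x ∈ s) :
    φ t - φ x ≤ u t - u x := by
  linarith [hmax x hx]

lemma le_of_tendsto_const_mul_intervalIntegral {f g : ℝ → ℝ} {b c A B : ℝ}
    (hb : 0 < b) (hc : 0 ≤ c) (hfg : ∀ τ ∈ Set.Ioc 0 b, f τ ≤ g τ)
    (hf : ∀ ρ ∈ Set.Ioo 0 b, IntervalIntegrable f volume ρ b)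
    (hg : ∀ ρ ∈ Set.Ioo 0 b, IntervalIntegrable g volume ρ b)
    (hA : Tendsto (fun ρ => c * ∫ τ in ρ..b, f τ) (𝓝[>] 0) (𝓝 A))
    (hB : Tendsto (fun ρ => c * ∫ τ in ρ..b, g τ) (𝓝[>] 0) (𝓝 B)) :
    A ≤ B := by
  refine le_of_tendsto_of_tendsto hA hB ?_
  filter_upwards [Ioo_mem_nhdsGT hb] with ρ hρ
  gcongr
  exact intervalIntegral.integral_mono_on hρ.2.le (hf ρ hρ) (hg ρ hρ)
    fun τ hτ => hfg τ ⟨hρ.1.trans_le hτ.1, hτ.2⟩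

theorem JK_test_function_le_general (α T that : ℝ) (hα : 0 < α) (hα1 : α < 1)
    (hthat : that ∈ Set.Ioc (0:ℝ) T)
    (u φ : ℝ → ℝ)
    (hmax : ∀ t ∈ Set.Icc (0:ℝ) T, u t - φ t ≤ u that - φ that)
    (Ku Kφ : ℝ)
    (hintu : ∀ ρ ∈ Set.Ioo (0:ℝ) that,
      IntervalIntegrable (fun τ => (u that - u (that - τ)) * τ ^ (-α - 1))
        MeasureTheory.volume ρ that)
    (hintφ : ∀ ρ ∈ Set.Ioo (0:ℝ) that,
      IntervalIntegrable (fun τ => (φ that - φ (that - τ)) * τ ^ (-α - 1))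
        MeasureTheory.volume ρ that)
    (hKu : Tendsto (fun ρ : ℝ =>
        (α / Real.Gamma (1 - α)) *
          ∫ τ in ρ..that, (u that - u (that - τ)) * τ ^ (-α - 1))
      (nhdsWithin 0 (Set.Ioi 0)) (nhds Ku))
    (hKφ : Tendsto (fun ρ : ℝ =>
        (α / Real.Gamma (1 - α)) *
          ∫ τ in ρ..that, (φ that - φ (that - τ)) * τ ^ (-α - 1))
      (nhdsWithin 0 (Set.Ioi 0)) (nhds Kφ)) :
    (φ that - φ 0) / (that ^ α * Real.Gamma (1 - α)) + Kφ ≤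
      (u that - u 0) / (that ^ α * Real.Gamma (1 - α)) + Ku := by
  obtain ⟨hthat0, hthatT⟩ := hthat
  have hΓ : 0 < Gamma (1 - α) := Gamma_pos_of_pos (by linarith)
  have hincr : ∀ τ ∈ Set.Icc 0 that, φ that - φ (that - τ) ≤ u that - u (that - τ) :=
    fun τ hτ => sub_le_sub_of_forall_sub_le hmax ⟨by linarith [hτ.2], by linarith [hτ.1]⟩
  have hJ : φ that - φ 0 ≤ u that - u 0 := by
    simpa using hincr that ⟨hthat0.le, le_rfl⟩
  have hK : Kφ ≤ Ku :=
    le_of_tendsto_const_mul_intervalIntegral hthat0 (by positivity)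
      (fun τ hτ => mul_le_mul_of_nonneg_right (hincr τ (Set.Ioc_subset_Icc_self hτ))
        (rpow_nonneg hτ.1.le _))
      hintφ hintu hKφ hKu
  gcongr

theorem JK_test_function_le (α T that : ℝ) (hα : 0 < α) (hα1 : α < 1)
    (hT : 0 < T) (hthat : that ∈ Set.Ioc (0:ℝ) T)
    (u φ : ℝ → ℝ)
    (hmax : ∀ t ∈ Set.Icc (0:ℝ) T, u t - φ t ≤ u that - φ that)
    (Ku Kφ : ℝ)
    (hintu : ∀ ρ ∈ Set.Ioo (0:ℝ) that,
      IntervalIntegrable (fun τ => (u that - u (that - τ)) * τ ^ (-α - 1))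
        MeasureTheory.volume ρ that)
    (hintφ : ∀ ρ ∈ Set.Ioo (0:ℝ) that,
      IntervalIntegrable (fun τ => (φ that - φ (that - τ)) * τ ^ (-α - 1))
        MeasureTheory.volume ρ that)
    (hKu : Tendsto (fun ρ : ℝ =>
        (α / Real.Gamma (1 - α)) *
          ∫ τ in ρ..that, (u that - u (that - τ)) * τ ^ (-α - 1))
      (nhdsWithin 0 (Set.Ioi 0)) (nhds Ku))
    (hKφ : Tendsto (fun ρ : ℝ =>
        (α / Real.Gamma (1 - α)) *
          ∫ τ in ρ..that, (φ that - φ (that - τ)) * τ ^ (-α - 1))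
      (nhdsWithin 0 (Set.Ioi 0)) (nhds Kφ)) :
    (φ that - φ 0) / (that ^ α * Real.Gamma (1 - α)) + Kφ ≤
      (u that - u 0) / (that ^ α * Real.Gamma (1 - α)) + Ku :=
  JK_test_function_le_general α T that hα hα1 hthat u φ hmax Ku Kφ hintu hintφ hKu hKφ
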